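/- Resilient estimation error bound: let 𝒳 ⊆ ℝⁿ, and for each block index i in a finite index set I of size p − q let Φᵢ : 𝒳 → ℝ^{nᵢ}. Let Ψ^I : ℝ^{N_I} → 𝒳 be a left inverse of the stacked map Φ_I = (Φᵢ)_{i∈I}, and suppose id − Φ_I∘Ψ^I is L-Lipschitz (sup-norm). Suppose ẑ_I = Φ_I(x) + e_I + r_I where x ∈ 𝒳, ‖r_I‖∞ ≤ δ, and the block vector e_I is q-sparse. Assume that for every J ⊆ I with |J| = p − 2q, the stacked map Φ_J is lower-Lipschitz on 𝒳 with constant ℓ_J > 0, and let ℓ := min over such J of ℓ_J. If ‖ẑ_I − Φ_I(Ψ^I(ẑ_I))‖∞ ≤ L·δ, then ‖Ψ^I(ẑ_I) − x‖∞ ≤ (L + 1)·δ / ℓ. -/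

import Mathlib

/-!
Since at most `q` of the `p - q` measured blocks are attacked, some `p - 2q` of them carry
only the bounded noise `r`. On such a block `j`, the residual test and the noise bound give
`‖Φⱼ(Ψ ẑ) - Φⱼ(x)‖ ≤ ‖ẑ - Φ(Ψ ẑ)‖ + ‖r‖ ≤ (L + 1) δ`, and lower-Lipschitzness of the
stack over these blocks turns this into `ℓ ‖Ψ ẑ - x‖ ≤ (L + 1) δ`.
-/

open Finset

lemma exists_card_eq_forall_eq_zero_of_card_support_le {ι : Type*} [Fintype ι]
    {β : ι → Type*} [∀ i, Zero (β i)] (e : (i : ι) → β i) [DecidablePred fun i => e i ≠ 0]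
    {q m : ℕ} (hsparse : #{i | e i ≠ 0} ≤ q) (hm : m ≤ Fintype.card ι - q) :
    ∃ J : Finset ι, #J = m ∧ ∀ j ∈ J, e j = 0 := by
  have hzeros : m ≤ #{i | ¬e i ≠ 0} := by
    have := card_filter_add_card_filter_not (s := univ) fun i => e i ≠ 0
    rw [card_univ] at this
    omega
  obtain ⟨J, hJ, hJcard⟩ := exists_subset_card_eq hzeros
  exact ⟨J, hJcard, fun j hj => not_not.1 (mem_filter.1 (hJ hj)).2⟩

lemma norm_sub_apply_le_of_apply_eq_zero {ι : Type*} [Fintype ι] {E : ι → Type*}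
    [∀ i, SeminormedAddCommGroup (E i)] (a b e r : (i : ι) → E i) {j : ι} (hj : e j = 0) :
    ‖b j - a j‖ ≤ ‖(a + e + r) - b‖ + ‖r‖ :=
  calc ‖b j - a j‖ = ‖r j - ((a + e + r) - b) j‖ := by
        simp only [Pi.add_apply, Pi.sub_apply, hj, add_zero]
        congr 1
        abel
    _ ≤ ‖r j‖ + ‖((a + e + r) - b) j‖ := norm_sub_le _ _
    _ ≤ ‖r‖ + ‖(a + e + r) - b‖ := add_le_add (norm_le_pi_norm r j) (norm_le_pi_norm _ j)
    _ = ‖(a + e + r) - b‖ + ‖r‖ := add_comm _ _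

lemma NNReal.coe_finset_sup_le {α : Type*} {s : Finset α} {f : α → NNReal} {C : ℝ}
    (hC : 0 ≤ C) (h : ∀ i ∈ s, (f i : ℝ) ≤ C) : ((s.sup f : NNReal) : ℝ) ≤ C := by
  rw [← Real.coe_toNNReal C hC, NNReal.coe_le_coe]
  exact Finset.sup_le fun i hi => (Real.le_toNNReal_iff_coe_le hC).2 (h i hi)

theorem resilient_estimation_error_bound_general
    {d p q : ℕ} {ι : Type*} [Fintype ι]
    (hcard : Fintype.card ι = p - q)
    (n : ι → ℕ) (𝒳 : Set (Fin d → ℝ))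
    (Φb : (i : ι) → (Fin d → ℝ) → (Fin (n i) → ℝ))
    (Ψ : ((i : ι) → Fin (n i) → ℝ) → (Fin d → ℝ))
    (hΨmem : ∀ z, Ψ z ∈ 𝒳)
    (L δ ℓ : ℝ) (hℓ : 0 < ℓ)
    (hlow : ∀ J : Finset ι, J.card = p - 2 * q →
      ∀ x₁ ∈ 𝒳, ∀ x₂ ∈ 𝒳,
        ℓ * ‖x₁ - x₂‖ ≤ ((J.sup fun j => ‖Φb j x₁ - Φb j x₂‖₊ : NNReal) : ℝ))
    (x : Fin d → ℝ) (hx : x ∈ 𝒳)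
    (e r zhat : (i : ι) → Fin (n i) → ℝ)
    (hr : ‖r‖ ≤ δ)
    (hsparse : (Finset.univ.filter (fun i : ι => e i ≠ 0)).card ≤ q)
    (hz : zhat = (fun i => Φb i x) + e + r)
    (hres : ‖zhat - fun i => Φb i (Ψ zhat)‖ ≤ L * δ) :
    ‖Ψ zhat - x‖ ≤ (L + 1) * δ / ℓ := by
  obtain ⟨J, hJcard, hJzero⟩ :=
    exists_card_eq_forall_eq_zero_of_card_support_le e hsparse (m := p - 2 * q) (by omega)
  have hJ : ((J.sup fun j => ‖Φb j (Ψ zhat) - Φb j x‖₊ : NNReal) : ℝ) ≤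
      ‖zhat - fun i => Φb i (Ψ zhat)‖ + ‖r‖ := by
    refine NNReal.coe_finset_sup_le (by positivity) fun j hj => ?_
    have := norm_sub_apply_le_of_apply_eq_zero (fun i => Φb i x) (fun i => Φb i (Ψ zhat)) e r
      (hJzero j hj)
    rwa [← hz] at this
  have hbound := (hlow J hJcard _ (hΨmem zhat) x hx).trans hJ
  rw [le_div_iff₀ hℓ]
  linarith

/-- Resilient estimation error bound: if the residual test passes
(`‖ẑ_I − Φ_I(Ψ^I ẑ_I)‖∞ ≤ L·δ`), the attack `e` is `q`-sparse, and every sub-stack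
`Φ_J` over `J` of size `p − 2q` is lower-Lipschitz with constant `ℓ > 0`, then the
estimate `Ψ^I(ẑ_I)` is within `(L+1)δ/ℓ` of the true state. -/
theorem resilient_estimation_error_bound
    {d p q : ℕ} {ι : Type*} [Fintype ι] [DecidableEq ι]
    (hcard : Fintype.card ι = p - q)
    (n : ι → ℕ) (𝒳 : Set (Fin d → ℝ))
    (Φb : (i : ι) → (Fin d → ℝ) → (Fin (n i) → ℝ))
    (Ψ : ((i : ι) → Fin (n i) → ℝ) → (Fin d → ℝ))
    (hΨmem : ∀ z, Ψ z ∈ 𝒳)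
    (hleft : ∀ x ∈ 𝒳, Ψ (fun i => Φb i x) = x)
    (L δ ℓ : ℝ) (hδ : 0 ≤ δ) (hℓ : 0 < ℓ)
    (hlip : ∀ z z' : (i : ι) → Fin (n i) → ℝ,
      ‖(z - fun i => Φb i (Ψ z)) - (z' - fun i => Φb i (Ψ z'))‖ ≤ L * ‖z - z'‖)
    (hlow : ∀ J : Finset ι, J.card = p - 2 * q →
      ∀ x₁ ∈ 𝒳, ∀ x₂ ∈ 𝒳,
        ℓ * ‖x₁ - x₂‖ ≤ ((J.sup fun j => ‖Φb j x₁ - Φb j x₂‖₊ : NNReal) : ℝ))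
    (x : Fin d → ℝ) (hx : x ∈ 𝒳)
    (e r zhat : (i : ι) → Fin (n i) → ℝ)
    (hr : ‖r‖ ≤ δ)
    (hsparse : (Finset.univ.filter (fun i : ι => e i ≠ 0)).card ≤ q)
    (hz : zhat = (fun i => Φb i x) + e + r)
    (hres : ‖zhat - fun i => Φb i (Ψ zhat)‖ ≤ L * δ) :
    ‖Ψ zhat - x‖ ≤ (L + 1) * δ / ℓ :=
  resilient_estimation_error_bound_general hcard n 𝒳 Φb Ψ hΨmem L δ ℓ hℓ hlow x hx e r zhat hr
    hsparse hz hres
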